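/- arXiv:1604.08418 — 3 statements merged into one kernel-verified Lean document; each statement's English description precedes it below -/
import Mathlib

section
/- Let p1 = Pr(D_{1/1}), p12 = Pr(D_{1/1,2}), q2 = Pr(D_{2/2}), q12 = Pr(D_{2/1,2}) be reals in (0,1] with p12 ≤ p1 and q12 ≤ q2. Define R_1 = {(λ_1,λ_2) : λ_1/p1 + ((p1−p12)/(p1·q12))·λ_2 < 1 and λ_2 < q12} and R_2 = {(λ_1,λ_2) : λ_2/q2 + ((q2−q12)/(q2·p12))·λ_1 < 1 and λ_1 < p12}. Then the union R_1 ∪ R_2 (restricted to the nonnegative quadrant) is a convex set if and only if p12/p1 + q12/q2 ≥ 1. -/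
/-!
Both boundary lines pass through the corner `(p12, q12)`. In the coordinates
`u = p12 - λ₁`, `v = q12 - λ₂` the two regions are the open cones `{A u + B v > 0, v > 0}` and
`{C v + D u > 0, u > 0}` with `A = 1/p1`, `B = (p1 - p12)/(p1 q12)`, `C = 1/q2`,
`D = (q2 - q12)/(q2 p12)`, and `B D ≤ A C` is exactly `p12/p1 + q12/q2 ≥ 1`. Under this condition
each cone lies in the half-plane of the other, so the union is the intersection of two half-planes.
Otherwise the corner, which lies in neither region, is a convex combination of a point `(s, 0)`
with `s < p1` and a point `(0, r)` with `r < q2`, both of which lie in the union.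
-/

open Set

section Cone

variable {A B C D u v : ℝ}

theorem pos_of_mem_cone (hA : 0 < A) (hC : 0 < C) (hD : 0 ≤ D) (hBD : B * D ≤ A * C)
    (huv : 0 < A * u + B * v) (hv : 0 < v) : 0 < C * v + D * u := by
  rcases hD.eq_or_lt with rfl | hD
  · simpa using mul_pos hC hv
  · have key : A * (C * v + D * u) = (A * C - B * D) * v + D * (A * u + B * v) := by ring
    have hpos : 0 < A * (C * v + D * u) := by
      rw [key]
      exact add_pos_of_nonneg_of_pos (mul_nonneg (sub_nonneg.2 hBD) hv.le) (mul_pos hD huv)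
    exact pos_of_mul_pos_right hpos hA.le

theorem mem_cone_or_mem_cone_iff (hA : 0 < A) (hC : 0 < C) (hB : 0 ≤ B) (hD : 0 ≤ D)
    (hBD : B * D ≤ A * C) :
    (0 < A * u + B * v ∧ 0 < v) ∨ (0 < C * v + D * u ∧ 0 < u) ↔
      0 < A * u + B * v ∧ 0 < C * v + D * u := by
  constructor
  · rintro (⟨huv, hv⟩ | ⟨hvu, hu⟩)
    · exact ⟨huv, pos_of_mem_cone hA hC hD hBD huv hv⟩
    · exact ⟨pos_of_mem_cone hC hA hB (by linarith [mul_comm B D, mul_comm A C]) hvu hu, hvu⟩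
  · rintro ⟨huv, hvu⟩
    by_cases hv : 0 < v
    · exact Or.inl ⟨huv, hv⟩
    · exact Or.inr ⟨hvu, by nlinarith⟩

end Cone

theorem Convex.mk_mem_of_mem_axes {S : Set (ℝ × ℝ)} (hS : Convex ℝ S) {s r t : ℝ}
    (hs : (s, 0) ∈ S) (hr : (0, r) ∈ S) (ht₀ : 0 ≤ t) (ht₁ : t ≤ 1) :
    ((1 - t) * s, t * r) ∈ S := by
  simpa using hS hs hr (sub_nonneg.2 ht₁) ht₀ (by ring)

namespace StabilityRegion

/-- The open half-plane below the line through `(a, 0)` and `(b, c)`. -/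
def halfPlane (a b c : ℝ) : Set (ℝ × ℝ) := {p | p.1 / a + ((a - b) / (a * c)) * p.2 < 1}

def region (a b c : ℝ) : Set (ℝ × ℝ) := halfPlane a b c ∩ {p | p.2 < c}

/-- `R₁ ∪ R₂` in the nonnegative quadrant: `R₂` is the mirror image of `R₁` with the two users
exchanged. -/
def stabilityRegion (p1 p12 q2 q12 : ℝ) : Set (ℝ × ℝ) :=
  (region p1 p12 q12 ∪ Prod.swap ⁻¹' region q2 q12 p12) ∩ Ici 0

section HalfPlane

variable {a b c : ℝ}

theorem convex_halfPlane : Convex ℝ (halfPlane a b c) :=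
  convex_halfSpace_lt
    ⟨fun p q => by simp only [Prod.fst_add, Prod.snd_add]; ring,
      fun r p => by simp only [Prod.smul_fst, Prod.smul_snd, smul_eq_mul]; ring⟩ 1

theorem mem_halfPlane_iff (ha : a ≠ 0) (hc : c ≠ 0) (p : ℝ × ℝ) :
    p ∈ halfPlane a b c ↔ 0 < a⁻¹ * (b - p.1) + (a - b) / (a * c) * (c - p.2) := by
  have h : a⁻¹ * (b - p.1) + (a - b) / (a * c) * (c - p.2) =
      1 - (p.1 / a + (a - b) / (a * c) * p.2) := by
    field_simp
    ring
  rw [h, sub_pos]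
  rfl

theorem mk_zero_mem_region (ha : 0 < a) (hc : 0 < c) {s : ℝ} (hs : s < a) :
    (s, 0) ∈ region a b c := by
  refine ⟨?_, hc⟩
  show s / a + (a - b) / (a * c) * 0 < 1
  rwa [mul_zero, add_zero, div_lt_one ha]

theorem corner_not_mem_region : (b, c) ∉ region a b c := fun h => lt_irrefl c h.2

end HalfPlane

variable {p1 p12 q2 q12 : ℝ}

theorem coeff_mul_le_of_one_le (hp1 : 0 < p1) (hp12 : 0 < p12) (hq2 : 0 < q2)
    (hq12 : 0 < q12) (h : 1 ≤ p12 / p1 + q12 / q2) :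
    (p1 - p12) / (p1 * q12) * ((q2 - q12) / (q2 * p12)) ≤ p1⁻¹ * q2⁻¹ := by
  rw [div_add_div _ _ hp1.ne' hq2.ne', one_le_div (by positivity)] at h
  rw [div_mul_div_comm, ← mul_inv, div_le_iff₀ (by positivity)]
  field_simp
  nlinarith [mul_pos hp12 hq12]

theorem region_union_eq_halfPlane_inter (hp1 : 0 < p1) (hp12 : 0 < p12) (hq2 : 0 < q2)
    (hq12 : 0 < q12) (h1 : p12 ≤ p1) (h2 : q12 ≤ q2) (h : 1 ≤ p12 / p1 + q12 / q2) :
    region p1 p12 q12 ∪ Prod.swap ⁻¹' region q2 q12 p12 =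
      halfPlane p1 p12 q12 ∩ Prod.swap ⁻¹' halfPlane q2 q12 p12 := by
  ext ⟨x, y⟩
  simp only [region, mem_union, mem_inter_iff, mem_preimage, Prod.swap_prod_mk, mem_ofPred_eq,
    mem_halfPlane_iff hp1.ne' hq12.ne', mem_halfPlane_iff hq2.ne' hp12.ne',
    ← sub_pos (a := p12) (b := x), ← sub_pos (a := q12) (b := y)]
  exact mem_cone_or_mem_cone_iff (inv_pos.2 hp1) (inv_pos.2 hq2)
    (div_nonneg (sub_nonneg.2 h1) (by positivity)) (div_nonneg (sub_nonneg.2 h2) (by positivity))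
    (coeff_mul_le_of_one_le hp1 hp12 hq2 hq12 h)

theorem convex_stabilityRegion (hp1 : 0 < p1) (hp12 : 0 < p12) (hq2 : 0 < q2)
    (hq12 : 0 < q12) (h1 : p12 ≤ p1) (h2 : q12 ≤ q2) (h : 1 ≤ p12 / p1 + q12 / q2) :
    Convex ℝ (stabilityRegion p1 p12 q2 q12) := by
  rw [stabilityRegion, region_union_eq_halfPlane_inter hp1 hp12 hq2 hq12 h1 h2 h]
  exact (convex_halfPlane.inter
    (convex_halfPlane.linear_preimage (LinearEquiv.prodComm ℝ ℝ ℝ).toLinearMap)).inter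
    (convex_Ici 0)

theorem not_convex_stabilityRegion (hp1 : 0 < p1) (hp12 : 0 < p12) (hq2 : 0 < q2)
    (hq12 : 0 < q12) (h : p12 / p1 + q12 / q2 < 1) :
    ¬ Convex ℝ (stabilityRegion p1 p12 q2 q12) := by
  intro hconv
  obtain ⟨t, hqt, htp⟩ : ∃ t, q12 / q2 < t ∧ t < 1 - p12 / p1 := exists_between (by linarith)
  have ht₀ : 0 < t := (div_pos hq12 hq2).trans hqt
  have ht₁ : 0 < 1 - t := (div_pos hp12 hp1).trans (by linarith)
  have hs : (p12 / (1 - t), (0 : ℝ)) ∈ stabilityRegion p1 p12 q2 q12 :=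
    ⟨Or.inl (mk_zero_mem_region hp1 hq12 ((div_lt_comm₀ ht₁ hp1).2 (by linarith))),
      by positivity, le_rfl⟩
  have hr : ((0 : ℝ), q12 / t) ∈ stabilityRegion p1 p12 q2 q12 :=
    ⟨Or.inr (mk_zero_mem_region hq2 hp12 ((div_lt_comm₀ ht₀ hq2).2 hqt)), le_rfl, by positivity⟩
  have hcorner := hconv.mk_mem_of_mem_axes hs hr ht₀.le (by linarith)
  rw [mul_div_cancel₀ _ ht₁.ne', mul_div_cancel₀ _ ht₀.ne'] at hcorner
  rcases hcorner.1 with h | h <;> exact corner_not_mem_region h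

end StabilityRegion

theorem stability_region_convex_iff
    (p1 p12 q2 q12 : ℝ) (hp1 : p1 ∈ Set.Ioc (0:ℝ) 1) (hp12 : p12 ∈ Set.Ioc (0:ℝ) 1)
    (hq2 : q2 ∈ Set.Ioc (0:ℝ) 1) (hq12 : q12 ∈ Set.Ioc (0:ℝ) 1)
    (h1 : p12 ≤ p1) (h2 : q12 ≤ q2) :
    Convex ℝ ((({p : ℝ × ℝ | p.1 / p1 + ((p1 - p12) / (p1 * q12)) * p.2 < 1 ∧ p.2 < q12} ∪
        {p : ℝ × ℝ | p.2 / q2 + ((q2 - q12) / (q2 * p12)) * p.1 < 1 ∧ p.1 < p12}) ∩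
        {p : ℝ × ℝ | 0 ≤ p.1 ∧ 0 ≤ p.2}))
      ↔ p12 / p1 + q12 / q2 ≥ 1 := by
  change Convex ℝ (StabilityRegion.stabilityRegion p1 p12 q2 q12) ↔ _
  refine ⟨fun hconv => not_lt.1 fun h => ?_, fun h => ?_⟩
  · exact StabilityRegion.not_convex_stabilityRegion hp1.1 hp12.1 hq2.1 hq12.1 h hconv
  · exact StabilityRegion.convex_stabilityRegion hp1.1 hp12.1 hq2.1 hq12.1 h1 h2 h
end

section
/- If p12/p1 + q12/q2 = 1 (with p1, p12, q2, q12 ∈ (0,1], p12 ≤ p1, q12 ≤ q2), then the closure of R_1 ∪ R_2 intersected with the nonnegative quadrant is exactly the triangle {(λ_1, λ_2) : λ_1 ≥ 0, λ_2 ≥ 0, λ_1/p1 + λ_2/q2 ≤ 1}. -/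
/-!
Under `p12 / p1 + q12 / q2 = 1` the oblique constraints of `R_1` and `R_2` both reduce to
`λ_1 / p1 + λ_2 / q2 < 1`, and on that open half-plane the side constraint `λ_2 < q12` of `R_1`
can fail only where `λ_1 < p12`, so `R_1 ∪ R_2` is exactly the open half-plane. Its closure is the
closed half-plane, because a nonzero linear functional is an open map.
-/

theorem ContinuousLinearMap.closure_setOf_lt {E : Type*} [NormedAddCommGroup E] [NormedSpace ℝ E]
    [CompleteSpace E] (f : E →L[ℝ] ℝ) (hf : f ≠ 0) (c : ℝ) :
    closure {x | f x < c} = {x | f x ≤ c} := by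
  have hsurj : Function.Surjective f := LinearMap.surjective_of_ne_zero (coe_injective.ne hf)
  have := f.closure_preimage hsurj (Set.Iio c)
  rwa [closure_Iio] at this

theorem closure_setOf_div_add_div_lt_one {a : ℝ} (ha : a ≠ 0) (b : ℝ) :
    closure {p : ℝ × ℝ | p.1 / a + p.2 / b < 1} = {p | p.1 / a + p.2 / b ≤ 1} := by
  let f : ℝ × ℝ →L[ℝ] ℝ :=
    a⁻¹ • ContinuousLinearMap.fst ℝ ℝ ℝ + b⁻¹ • ContinuousLinearMap.snd ℝ ℝ ℝ
  have hf : f ≠ 0 := fun h => by simpa [f, ha] using congrArg (· (1, 0)) h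
  simpa [f, div_eq_inv_mul] using f.closure_setOf_lt hf 1

theorem sub_div_mul_eq_inv_of_div_add_div_eq_one {a b c d : ℝ} (ha : a ≠ 0) (hb : b ≠ 0)
    (hd : d ≠ 0) (h : c / a + d / b = 1) : (a - c) / (a * d) = b⁻¹ := by
  field_simp at h ⊢
  linarith

theorem setOf_union_setOf_eq_setOf_div_add_div_lt_one {a b c d : ℝ} (ha : 0 < a) (hb : 0 < b)
    (hc : 0 < c) (hd : 0 < d) (h : c / a + d / b = 1) :
    {p : ℝ × ℝ | p.1 / a + ((a - c) / (a * d)) * p.2 < 1 ∧ p.2 < d} ∪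
        {p : ℝ × ℝ | p.2 / b + ((b - d) / (b * c)) * p.1 < 1 ∧ p.1 < c}
      = {p : ℝ × ℝ | p.1 / a + p.2 / b < 1} := by
  have h' : d / b + c / a = 1 := by rwa [add_comm]
  rw [sub_div_mul_eq_inv_of_div_add_div_eq_one ha.ne' hb.ne' hd.ne' h,
    sub_div_mul_eq_inv_of_div_add_div_eq_one hb.ne' ha.ne' hc.ne' h']
  ext ⟨x, y⟩
  simp only [Set.mem_union, Set.mem_ofPred_eq, inv_mul_eq_div]
  constructor
  · rintro (⟨hxy, -⟩ | ⟨hxy, -⟩) <;> linarith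
  · intro hxy
    by_cases hy : y < d
    · exact Or.inl ⟨hxy, hy⟩
    · have : d / b ≤ y / b := by gcongr; linarith
      have : x / a < c / a := by linarith
      exact Or.inr ⟨by linarith, (div_lt_div_iff_of_pos_right ha).mp this⟩

theorem stability_region_eq_time_sharing_triangle_general
    (p1 p12 q2 q12 : ℝ) (hp1 : p1 ∈ Set.Ioc (0:ℝ) 1) (hp12 : p12 ∈ Set.Ioc (0:ℝ) 1)
    (hq2 : q2 ∈ Set.Ioc (0:ℝ) 1) (hq12 : q12 ∈ Set.Ioc (0:ℝ) 1)
    (heq : p12 / p1 + q12 / q2 = 1) :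
    closure ({p : ℝ × ℝ | p.1 / p1 + ((p1 - p12) / (p1 * q12)) * p.2 < 1 ∧ p.2 < q12} ∪
        {p : ℝ × ℝ | p.2 / q2 + ((q2 - q12) / (q2 * p12)) * p.1 < 1 ∧ p.1 < p12}) ∩
      {p : ℝ × ℝ | 0 ≤ p.1 ∧ 0 ≤ p.2}
      = {p : ℝ × ℝ | 0 ≤ p.1 ∧ 0 ≤ p.2 ∧ p.1 / p1 + p.2 / q2 ≤ 1} := by
  rw [setOf_union_setOf_eq_setOf_div_add_div_lt_one hp1.1 hq2.1 hp12.1 hq12.1 heq,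
    closure_setOf_div_add_div_lt_one hp1.1.ne' q2]
  ext p
  simp only [Set.mem_inter_iff, Set.mem_ofPred_eq]
  tauto

theorem stability_region_eq_time_sharing_triangle
    (p1 p12 q2 q12 : ℝ) (hp1 : p1 ∈ Set.Ioc (0:ℝ) 1) (hp12 : p12 ∈ Set.Ioc (0:ℝ) 1)
    (hq2 : q2 ∈ Set.Ioc (0:ℝ) 1) (hq12 : q12 ∈ Set.Ioc (0:ℝ) 1)
    (h1 : p12 ≤ p1) (h2 : q12 ≤ q2)
    (heq : p12 / p1 + q12 / q2 = 1) :
    closure ({p : ℝ × ℝ | p.1 / p1 + ((p1 - p12) / (p1 * q12)) * p.2 < 1 ∧ p.2 < q12} ∪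
        {p : ℝ × ℝ | p.2 / q2 + ((q2 - q12) / (q2 * p12)) * p.1 < 1 ∧ p.1 < p12}) ∩
      {p : ℝ × ℝ | 0 ≤ p.1 ∧ 0 ≤ p.2}
      = {p : ℝ × ℝ | 0 ≤ p.1 ∧ 0 ≤ p.2 ∧ p.1 / p1 + p.2 / q2 ≤ 1} :=
  stability_region_eq_time_sharing_triangle_general p1 p12 q2 q12 hp1 hp12 hq2 hq12 heq
end

section
/- The supremum of λ_1 + λ_2 over the closure of the stability region R = R_1 ∪ R_2 (intersected with the nonnegative quadrant) equals max{q2, p12 + q12, p1}, where p1, p12, q2, q12 ∈ (0,1] with p12 ≤ p1 and q12 ≤ q2. -/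
/-!
Both pieces of the stability region are polygons cut out by strict linear inequalities, so the
closure of each is the corresponding closed polygon: shrinking a point of the closed polygon
towards the origin by a factor `t < 1` makes every inequality strict. The linear functional
`λ₁ + λ₂` attains its maximum over a polygon at a vertex; the vertices of the two pieces are
`(p1, 0)`, `(p12, q12)` and `(0, q2)`.
-/

open Filter Topology Set

lemma mem_closure_of_forall_smul_mem {E : Type*} [AddCommGroup E] [Module ℝ E]
    [TopologicalSpace E] [ContinuousSMul ℝ E] {s : Set E} {z : E}
    (h : ∀ t ∈ Ioo (0 : ℝ) 1, t • z ∈ s) : z ∈ closure s := by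
  have hlim : Tendsto (fun t : ℝ => t • z) (𝓝[<] 1) (𝓝 z) := by
    have hcont : Continuous fun t : ℝ => t • z := by fun_prop
    simpa using (hcont.tendsto 1).mono_left nhdsWithin_le_nhds
  exact mem_closure_of_tendsto hlim (eventually_of_mem (Ioo_mem_nhdsLT zero_lt_one) h)

/-- The region `R_1` of the paper is `stabilityRegion p1 p12 q12`; `R_2` is its mirror image
`Prod.swap ⁻¹' stabilityRegion q2 q12 p12`. -/
def stabilityRegion (a b c : ℝ) : Set (ℝ × ℝ) :=
  {p | 0 ≤ p.1 ∧ 0 ≤ p.2} ∩ {p | p.1 / a + ((a - b) / (a * c)) * p.2 < 1 ∧ p.2 < c}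

def closedStabilityRegion (a b c : ℝ) : Set (ℝ × ℝ) :=
  {p | 0 ≤ p.1 ∧ 0 ≤ p.2 ∧ p.1 / a + ((a - b) / (a * c)) * p.2 ≤ 1 ∧ p.2 ≤ c}

section Region

variable {a b c : ℝ}

lemma closure_stabilityRegion_subset :
    closure (stabilityRegion a b c) ⊆ closedStabilityRegion a b c := by
  refine closure_minimal (fun p ⟨⟨hx, hy⟩, hline, hcap⟩ => ⟨hx, hy, hline.le, hcap.le⟩) ?_
  exact (isClosed_le continuous_const continuous_fst).inter <|
    (isClosed_le continuous_const continuous_snd).inter <|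
    (isClosed_le ((continuous_fst.div_const _).add (continuous_const.mul continuous_snd))
      continuous_const).inter (isClosed_le continuous_snd continuous_const)

lemma closure_stabilityRegion (hc : 0 < c) :
    closure (stabilityRegion a b c) = closedStabilityRegion a b c := by
  refine closure_stabilityRegion_subset.antisymm fun p ⟨hx, hy, hline, hcap⟩ => ?_
  refine mem_closure_of_forall_smul_mem fun t ⟨ht0, ht1⟩ => ?_
  have hscaled : (t * p.1) / a + ((a - b) / (a * c)) * (t * p.2)
      = t * (p.1 / a + ((a - b) / (a * c)) * p.2) := by ring
  refine ⟨⟨mul_nonneg ht0.le hx, mul_nonneg ht0.le hy⟩, ?_, ?_⟩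
  · simp only [Prod.smul_fst, Prod.smul_snd, smul_eq_mul, hscaled]
    nlinarith
  · simp only [Prod.smul_snd, smul_eq_mul]
    nlinarith

lemma add_le_of_mem_closedStabilityRegion (ha : 0 < a) (hc : 0 < c) {p : ℝ × ℝ}
    (hp : p ∈ closedStabilityRegion a b c) : p.1 + p.2 ≤ max (b + c) a := by
  obtain ⟨hx, hy, hline, hcap⟩ := hp
  have hline' : p.1 * c + (a - b) * p.2 ≤ a * c := by
    rwa [show p.1 / a + (a - b) / (a * c) * p.2 = (p.1 * c + (a - b) * p.2) / (a * c) by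
      field_simp, div_le_one (by positivity)] at hline
  rcases le_total (a - b) c with hab | hab
  · exact le_max_of_le_left (by nlinarith)
  · exact le_max_of_le_right (by nlinarith)

lemma isGreatest_image_add_closedStabilityRegion (ha : 0 < a) (hb : 0 ≤ b) (hc : 0 < c) :
    IsGreatest ((fun p : ℝ × ℝ => p.1 + p.2) '' closedStabilityRegion a b c) (max (b + c) a) := by
  refine ⟨?_, forall_mem_image.2 fun p hp => add_le_of_mem_closedStabilityRegion ha hc hp⟩
  rcases le_total (b + c) a with h | h
  · exact ⟨(a, 0), ⟨ha.le, le_rfl, by simp [ha.ne'], hc.le⟩, by simp [h]⟩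
  · have hvertex : b / a + (a - b) / (a * c) * c = 1 := by field_simp; ring
    exact ⟨(b, c), ⟨hb, hc.le, hvertex.le, le_rfl⟩, by simp [h]⟩

lemma preimage_swap_stabilityRegion : Prod.swap ⁻¹' stabilityRegion a b c =
    {p | 0 ≤ p.1 ∧ 0 ≤ p.2} ∩ {p | p.2 / a + ((a - b) / (a * c)) * p.1 < 1 ∧ p.1 < c} := by
  ext p
  simp only [stabilityRegion, mem_preimage, mem_inter_iff, mem_ofPred_eq, Prod.fst_swap,
    Prod.snd_swap, and_comm (a := 0 ≤ p.2)]

end Region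

lemma image_add_preimage_swap (s : Set (ℝ × ℝ)) :
    (fun p : ℝ × ℝ => p.1 + p.2) '' (Prod.swap ⁻¹' s) = (fun p : ℝ × ℝ => p.1 + p.2) '' s := by
  rw [← image_swap_eq_preimage_swap, image_image]
  simp only [Prod.fst_swap, Prod.snd_swap, add_comm]

theorem max_aggregate_stable_throughput_general
    (p1 p12 q2 q12 : ℝ) (hp1 : p1 ∈ Set.Ioc (0:ℝ) 1) (hp12 : p12 ∈ Set.Ioc (0:ℝ) 1)
    (hq2 : q2 ∈ Set.Ioc (0:ℝ) 1) (hq12 : q12 ∈ Set.Ioc (0:ℝ) 1) :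
    sSup ((fun p : ℝ × ℝ => p.1 + p.2) ''
      (closure (({p : ℝ × ℝ | 0 ≤ p.1 ∧ 0 ≤ p.2} ∩
          {p : ℝ × ℝ | p.1 / p1 + ((p1 - p12) / (p1 * q12)) * p.2 < 1 ∧ p.2 < q12}) ∪
        ({p : ℝ × ℝ | 0 ≤ p.1 ∧ 0 ≤ p.2} ∩
          {p : ℝ × ℝ | p.2 / q2 + ((q2 - q12) / (q2 * p12)) * p.1 < 1 ∧ p.1 < p12})) ∩
        {p : ℝ × ℝ | 0 ≤ p.1 ∧ 0 ≤ p.2}))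
      = max q2 (max (p12 + q12) p1) := by
  rw [← stabilityRegion, ← preimage_swap_stabilityRegion]
  have hclosure : closure (stabilityRegion p1 p12 q12 ∪ Prod.swap ⁻¹' stabilityRegion q2 q12 p12)
      = closedStabilityRegion p1 p12 q12 ∪ Prod.swap ⁻¹' closedStabilityRegion q2 q12 p12 := by
    have hswap := (Homeomorph.prodComm ℝ ℝ).preimage_closure (stabilityRegion q2 q12 p12)
    rw [Homeomorph.coe_prodComm] at hswap
    rw [closure_union, ← hswap, closure_stabilityRegion hq12.1, closure_stabilityRegion hp12.1]
  have hnonneg : closedStabilityRegion p1 p12 q12 ∪ Prod.swap ⁻¹' closedStabilityRegion q2 q12 p12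
      ⊆ {p | 0 ≤ p.1 ∧ 0 ≤ p.2} := by
    rintro p (⟨hx, hy, -⟩ | ⟨hy, hx, -⟩) <;> exact ⟨hx, hy⟩
  rw [hclosure, inter_eq_left.2 hnonneg, image_union, image_add_preimage_swap]
  have hmax := (isGreatest_image_add_closedStabilityRegion hp1.1 hp12.1.le hq12.1).union
    (isGreatest_image_add_closedStabilityRegion hq2.1 hq12.1.le hp12.1)
  rw [hmax.csSup_eq, add_comm q12, max_max_max_comm, max_self]
  ac_rfl

theorem max_aggregate_stable_throughput
    (p1 p12 q2 q12 : ℝ) (hp1 : p1 ∈ Set.Ioc (0:ℝ) 1) (hp12 : p12 ∈ Set.Ioc (0:ℝ) 1)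
    (hq2 : q2 ∈ Set.Ioc (0:ℝ) 1) (hq12 : q12 ∈ Set.Ioc (0:ℝ) 1)
    (h1 : p12 ≤ p1) (h2 : q12 ≤ q2) :
    sSup ((fun p : ℝ × ℝ => p.1 + p.2) ''
      (closure (({p : ℝ × ℝ | 0 ≤ p.1 ∧ 0 ≤ p.2} ∩
          {p : ℝ × ℝ | p.1 / p1 + ((p1 - p12) / (p1 * q12)) * p.2 < 1 ∧ p.2 < q12}) ∪
        ({p : ℝ × ℝ | 0 ≤ p.1 ∧ 0 ≤ p.2} ∩
          {p : ℝ × ℝ | p.2 / q2 + ((q2 - q12) / (q2 * p12)) * p.1 < 1 ∧ p.1 < p12})) ∩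
        {p : ℝ × ℝ | 0 ≤ p.1 ∧ 0 ≤ p.2}))
      = max q2 (max (p12 + q12) p1) :=
  max_aggregate_stable_throughput_general p1 p12 q2 q12 hp1 hp12 hq2 hq12
end
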